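/- arXiv:2311.15039 — 2 statements merged into one kernel-verified Lean document; each statement's English description precedes it below -/
import Mathlib

section
/- Let G be a group generated by a finite set A, let π : (A ∪ A⁻¹)* → G be the canonical surjective monoid homomorphism, and let H be a subgroup of G. Then H is a recognizable subset of G if and only if H has finite index in G. -/
/-- The canonical monoid homomorphism `π` from the free monoid over the alphabet
`X ⊕ X` (generators and their formal inverses) to a group `G`, induced by `f : X → G`:
a left letter `Sum.inl x` is sent to `f x` and a right (formal inverse) letter
`Sum.inr x` is sent to `(f x)⁻¹`. -/
def wordHom {X G : Type} [Group G] (f : X → G) : FreeMonoid (X ⊕ X) →* G :=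
  FreeMonoid.lift (Sum.elim f fun x => (f x)⁻¹)

/-- A subset `K ⊆ G` is recognizable (with respect to the generating map `f : X → G`)
if its full preimage under the canonical homomorphism is a regular language
over the alphabet of generators and formal inverses. -/
def IsRecognizableSubset {X G : Type} [Group G] (f : X → G) (K : Set G) : Prop :=
  Language.IsRegular
    ({w : List (X ⊕ X) | wordHom f (FreeMonoid.ofList w) ∈ K} : Language (X ⊕ X))


/-!
The left quotient of `π⁻¹(H)` by a word `u` is `π⁻¹(π(u)⁻¹ H)`, the preimage of a left coset.
As `π` is surjective, distinct cosets have distinct preimages and every coset occurs, so the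
left quotients of `π⁻¹(H)` are in bijection with `G ⧸ H`. By the Myhill–Nerode theorem,
`π⁻¹(H)` is regular iff there are finitely many of them, i.e. iff `H` has finite index.
-/

open Language Function

section WordPreimage

variable {α G : Type*} [Group G] (φ : FreeMonoid α →* G) (H : Subgroup G)

def wordPreimage (K : Set G) : Language α := {w | φ (FreeMonoid.ofList w) ∈ K}

def cosetLanguage (q : G ⧸ H) : Language α := {w | (φ (FreeMonoid.ofList w) : G ⧸ H) = q}

theorem leftQuotient_wordPreimage (u : List α) :
    (wordPreimage φ H).leftQuotient u =
      cosetLanguage φ H (QuotientGroup.mk (φ (FreeMonoid.ofList u))⁻¹) := by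
  ext v
  change φ (FreeMonoid.ofList (u ++ v)) ∈ H ↔ (φ (FreeMonoid.ofList v) : G ⧸ H) = _
  rw [FreeMonoid.ofList_append, map_mul, QuotientGroup.eq, ← mul_inv_rev, inv_mem_iff]

variable {φ}

theorem cosetLanguage_injective (hφ : Surjective φ) : Injective (cosetLanguage φ H) := by
  intro q q' h
  obtain ⟨g, rfl⟩ := QuotientGroup.mk_surjective q
  obtain ⟨w, rfl⟩ := hφ g
  have hw : FreeMonoid.toList w ∈ cosetLanguage φ H (φ w) := rfl
  rw [h] at hw
  exact hw

theorem range_leftQuotient_wordPreimage (hφ : Surjective φ) :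
    Set.range (wordPreimage φ H).leftQuotient = Set.range (cosetLanguage φ H) := by
  have hsurj : Surjective fun u : List α ↦ (QuotientGroup.mk (φ (FreeMonoid.ofList u))⁻¹ : G ⧸ H) :=
    QuotientGroup.mk_surjective.comp <| inv_surjective.comp <| hφ.comp FreeMonoid.ofList.surjective
  rw [← hsurj.range_comp]
  exact congrArg Set.range (funext (leftQuotient_wordPreimage φ H))

theorem isRegular_wordPreimage_iff_finiteIndex (hφ : Surjective φ) :
    (wordPreimage φ H).IsRegular ↔ H.FiniteIndex := by
  rw [isRegular_iff_finite_range_leftQuotient, range_leftQuotient_wordPreimage H hφ,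
    Set.finite_range_iff (cosetLanguage_injective H hφ), Subgroup.finiteIndex_iff_finite_quotient]

end WordPreimage

theorem wordHom_surjective {X G : Type} [Group G] (f : X → G)
    (hgen : Subgroup.closure (Set.range f) = ⊤) : Surjective (wordHom f) := by
  rw [← MonoidHom.mrange_eq_top, wordHom, FreeMonoid.mrange_lift, Set.Sum.elim_range,
    ← Set.inv_range, ← Subgroup.closure_toSubmonoid, hgen, Subgroup.top_toSubmonoid]

theorem isRecognizableSubset_iff_finiteIndex_general {X G : Type} [Group G] (f : X → G)
    (hgen : Subgroup.closure (Set.range f) = ⊤)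
    (H : Subgroup G) :
    IsRecognizableSubset f (H : Set G) ↔ H.FiniteIndex :=
  isRegular_wordPreimage_iff_finiteIndex H (wordHom_surjective f hgen)

/-- A subgroup `H` of a group `G` generated by a finite set is a recognizable subset
of `G` if and only if `H` has finite index in `G`. -/
theorem isRecognizableSubset_iff_finiteIndex {X G : Type} [Fintype X] [Group G] (f : X → G)
    (hgen : Subgroup.closure (Set.range f) = ⊤)
    (H : Subgroup G) :
    IsRecognizableSubset f (H : Set G) ↔ H.FiniteIndex :=
  isRecognizableSubset_iff_finiteIndex_general f hgen H
end

section
/- Let m ≥ 1 and let BS(1, m) = ⟨a, t ∣ t⁻¹ a t = aᵐ⟩ be the metabelian Baumslag–Solitar group, presented as the quotient of the free group on {a, t} by the normal closure of the single relator t⁻¹ a t a⁻ᵐ. Then for every element x ∈ BS(1, m), the centralizer C(x) = {g ∈ BS(1, m) : gx = xg} is an algebraic subset of BS(1, m). -/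
/-- A subset `S ⊆ G` is algebraic (with respect to the generating map `f : X → G`)
if it is the image under the canonical homomorphism of a context-free language. -/
def IsAlgebraicSubset {X G : Type} [Group G] (f : X → G) (S : Set G) : Prop :=
  ∃ L : Language (X ⊕ X), L.IsContextFree ∧
    (fun w : List (X ⊕ X) => wordHom f (FreeMonoid.ofList w)) '' L = S

/-- The single relator `t⁻¹ a t a⁻ᵐ` of the Baumslag–Solitar group `BS(1, m)`,
where `a = FreeGroup.of true` and `t = FreeGroup.of false`. -/
def BSRels (m : ℕ) : Set (FreeGroup Bool) :=
  {(FreeGroup.of false)⁻¹ * FreeGroup.of true * FreeGroup.of false *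
    (FreeGroup.of true ^ m)⁻¹}

/-- The Baumslag–Solitar group `BS(1, m) = ⟨a, t ∣ t⁻¹ a t = aᵐ⟩`, presented as the
quotient of the free group on two generators by the normal closure of `t⁻¹ a t a⁻ᵐ`. -/
def BS (m : ℕ) : Type := PresentedGroup (BSRels m)

instance (m : ℕ) : Group (BS m) := by unfold BS; infer_instance

/-!
`BS(1, m)` acts faithfully on `ℚ` by affine maps, `a` by `y ↦ y + 1` and `t` by `y ↦ m y`, so
centralizers can be computed among affine maps. For `m = 1` the group is abelian. For `m ≥ 2`,
let `φ` be the homomorphism counting `t`-exponents: the centralizer of `1` is everything, that of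
a non-trivial element of `ker φ` is `ker φ`, and any other centralizer meets `ker φ` trivially,
hence embeds in `ℤ` and is cyclic. A finitely generated subgroup is the image of the Kleene star
of finitely many words, and `ker φ = {tⁱ aʲ t⁻ⁱ}` is the image of the language of
`S → ε | a S | a⁻¹ S | t S t⁻¹`. That a grammar's words evaluate into a given subset is checked
by reading each rule as an inclusion between subsets of the group.
-/

open Pointwise

namespace ContextFreeGrammar

variable {T M : Type*} [Monoid M]

def interpret {N : Type*} (F : T → M) (I : N → Set M) : Symbol T N → Set M
  | .terminal x => {F x}
  | .nonterminal n => I n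

lemma prod_map_interpret_terminal {N : Type*} (F : T → M) (I : N → Set M) (w : List T) :
    ((w.map .terminal).map (interpret F I)).prod = {(w.map F).prod} := by
  rw [← Set.singletonMonoidHom_apply, map_list_prod, List.map_map, List.map_map]
  rfl

variable {g : ContextFreeGrammar T} {F : T → M} {I : g.NT → Set M}

lemma Derives.prod_map_interpret_subset
    (hI : ∀ r ∈ g.rules, (r.output.map (interpret F I)).prod ⊆ I r.input)
    {u v : List (Symbol T g.NT)} (h : g.Derives u v) :
    (v.map (interpret F I)).prod ⊆ (u.map (interpret F I)).prod := by
  induction h with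
  | refl => rfl
  | tail _ step ih =>
    obtain ⟨r, hr, hrw⟩ := step
    obtain ⟨p, q, rfl, rfl⟩ := hrw.exists_parts
    refine subset_trans ?_ ih
    simp only [List.map_append, List.prod_append]
    gcongr
    simpa [interpret] using hI r hr

theorem prod_mem_of_mem_language
    (hI : ∀ r ∈ g.rules, (r.output.map (interpret F I)).prod ⊆ I r.input)
    {w : List T} (hw : w ∈ g.language) : (w.map F).prod ∈ I g.initial := by
  have := Derives.prod_map_interpret_subset hI hw
  rw [prod_map_interpret_terminal] at this
  simpa [interpret] using this

theorem nil_mem_language_of_rule (hr : ⟨g.initial, []⟩ ∈ g.rules) : [] ∈ g.language :=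
  Produces.single ⟨_, hr, ContextFreeRule.Rewrites.input_output⟩

theorem append_mem_language_of_rule {p q : List T}
    (hr : ⟨g.initial, p.map .terminal ++ [.nonterminal g.initial] ++ q.map .terminal⟩ ∈ g.rules)
    {w : List T} (hw : w ∈ g.language) : p ++ w ++ q ∈ g.language := by
  have step : g.Produces [.nonterminal g.initial]
      (p.map .terminal ++ [.nonterminal g.initial] ++ q.map .terminal) :=
    ⟨_, hr, ContextFreeRule.Rewrites.input_output⟩
  have := (hw.append_right (q.map .terminal)).append_left (p.map .terminal)
  rw [mem_language_iff, List.map_append, List.map_append]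
  exact step.trans_derives (by simpa using this)

abbrev kstar [DecidableEq T] (ws : Finset (List T)) : ContextFreeGrammar T where
  NT := Unit
  initial := ()
  rules := insert ⟨(), []⟩ (ws.image fun w => ⟨(), w.map .terminal ++ [.nonterminal ()]⟩)

theorem image_prod_kstar_language [DecidableEq T] (F : T → M) (ws : Finset (List T)) :
    (fun w : List T => (w.map F).prod) '' (kstar ws).language =
      Submonoid.closure ((fun w : List T => (w.map F).prod) '' ws) := by
  refine Set.Subset.antisymm ?_ fun y hy => ?_
  · rintro _ ⟨w, hw, rfl⟩
    refine prod_mem_of_mem_language (I := fun _ => SetLike.coe (Submonoid.closure _)) ?_ hw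
    simp only [Finset.mem_insert, Finset.mem_image]
    rintro r (rfl | ⟨v, hv, rfl⟩)
    · simp
    · simp only [List.map_append, List.prod_append, prod_map_interpret_terminal, List.map_cons,
        List.map_nil, List.prod_singleton, interpret, Set.mul_subset_iff, Set.mem_singleton_iff]
      rintro _ rfl y hy
      exact mul_mem (Submonoid.subset_closure ⟨v, hv, rfl⟩) hy
  · induction hy using Submonoid.closure_induction_left with
    | one => exact ⟨[], nil_mem_language_of_rule (Finset.mem_insert_self _ _), rfl⟩
    | mul_left _ hv _ _ ih =>
      obtain ⟨v, hv, rfl⟩ := hv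
      obtain ⟨w, hw, rfl⟩ := ih
      have hrule : (⟨(), v.map .terminal ++ [.nonterminal ()] ++ ([] : List T).map .terminal⟩ :
          ContextFreeRule T Unit) ∈ (kstar ws).rules := by
        rw [List.map_nil, List.append_nil]
        exact Finset.mem_insert_of_mem (Finset.mem_image_of_mem _ hv)
      have h := append_mem_language_of_rule hrule hw
      rw [List.append_nil] at h
      exact ⟨v ++ w, h, by simp⟩

end ContextFreeGrammar

open ContextFreeGrammar

section IsAlgebraicSubset

variable {X G : Type} [Group G] {f : X → G}

@[simp] lemma wordHom_ofList (w : List (X ⊕ X)) :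
    wordHom f (FreeMonoid.ofList w) = (w.map (Sum.elim f fun x => (f x)⁻¹)).prod :=
  FreeMonoid.lift_ofList _ _

@[simp] lemma wordHom_of (x : X ⊕ X) :
    wordHom f (FreeMonoid.of x) = Sum.elim f (fun x => (f x)⁻¹) x :=
  FreeMonoid.lift_eval_of _ _

lemma wordHom_surjective_s6 (hf : Subgroup.closure (Set.range f) = ⊤) :
    Function.Surjective (wordHom f) := by
  rw [← MonoidHom.mrange_eq_top, eq_top_iff, ← Subgroup.top_toSubmonoid, ← hf,
    Subgroup.closure_toSubmonoid, Submonoid.closure_le]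
  rintro _ (⟨x, rfl⟩ | ⟨x, hx⟩)
  · exact ⟨.of (.inl x), rfl⟩
  · exact ⟨.of (.inr x), by simp [hx]⟩

theorem IsAlgebraicSubset.submonoidClosure (hf : Function.Surjective (wordHom f)) {S : Set G}
    (hS : S.Finite) : IsAlgebraicSubset f (Submonoid.closure S) := by
  classical
  let word (g : G) : List (X ⊕ X) := (Function.surjInv hf g).toList
  have hword : (fun w : List (X ⊕ X) => wordHom f (.ofList w)) ∘ word = id :=
    funext (Function.surjInv_eq hf)
  refine ⟨_, ⟨kstar (hS.toFinset.image word), rfl⟩, ?_⟩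
  simp only [wordHom_ofList] at hword ⊢
  rw [image_prod_kstar_language, Finset.coe_image, ← Set.image_comp, hword, Set.image_id,
    hS.coe_toFinset]

theorem IsAlgebraicSubset.subgroupClosure (hf : Function.Surjective (wordHom f)) {S : Set G}
    (hS : S.Finite) : IsAlgebraicSubset f (Subgroup.closure S) := by
  rw [← Subgroup.coe_toSubmonoid, Subgroup.closure_toSubmonoid]
  exact .submonoidClosure hf (hS.union hS.inv)

end IsAlgebraicSubset

theorem Subgroup.exists_zpowers_eq_of_disjoint_ker {G C : Type*} [Group G] [Group C] [IsCyclic C]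
    {H : Subgroup G} (f : G →* C) (hH : Disjoint H f.ker) : ∃ g, zpowers g = H := by
  have : IsCyclic H := isCyclic_of_injective (f.comp H.subtype) <|
    (injective_iff_map_eq_one _).mpr fun h hh =>
      Subtype.ext (disjoint_def.mp hH h.2 (f.mem_ker.mpr hh))
  exact H.isCyclic_iff_exists_zpowers_eq_top.mp this

lemma Units.val_zpow_ne_one_of_not_isOfFinOrder {R : Type*} [Monoid R] {u : Rˣ}
    (hu : ¬IsOfFinOrder u) {k : ℤ} (hk : k ≠ 0) : ((u ^ k : Rˣ) : R) ≠ 1 :=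
  fun h => hu (isOfFinOrder_iff_zpow_eq_one.mpr ⟨k, hk, Units.val_eq_one.mp h⟩)

/-- `⟨k, b⟩` is the affine map `y ↦ uᵏ y + b`; maps are composed left to right, so `g * h` is
`g` followed by `h`. -/
@[ext]
structure IntAffine (R : Type*) [CommRing R] (u : Rˣ) where
  exp : ℤ
  shift : R

namespace IntAffine

variable {R : Type*} [CommRing R] {u : Rˣ}

instance : Mul (IntAffine R u) :=
  ⟨fun g h => ⟨g.exp + h.exp, (u ^ h.exp : Rˣ) * g.shift + h.shift⟩⟩
instance : One (IntAffine R u) := ⟨⟨0, 0⟩⟩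
instance : Inv (IntAffine R u) := ⟨fun g => ⟨-g.exp, -((u ^ (-g.exp) : Rˣ) * g.shift)⟩⟩

@[simp] lemma mul_exp (g h : IntAffine R u) : (g * h).exp = g.exp + h.exp := rfl
@[simp] lemma mul_shift (g h : IntAffine R u) :
    (g * h).shift = (u ^ h.exp : Rˣ) * g.shift + h.shift := rfl
@[simp] lemma one_exp : (1 : IntAffine R u).exp = 0 := rfl
@[simp] lemma one_shift : (1 : IntAffine R u).shift = 0 := rfl
@[simp] lemma inv_exp (g : IntAffine R u) : g⁻¹.exp = -g.exp := rfl
@[simp] lemma inv_shift (g : IntAffine R u) : g⁻¹.shift = -((u ^ (-g.exp) : Rˣ) * g.shift) := rfl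

instance : Group (IntAffine R u) where
  mul_assoc g h k := by ext <;> simp [zpow_add] <;> ring
  one_mul g := by ext <;> simp
  mul_one g := by ext <;> simp
  inv_mul_cancel g := by ext <;> simp [← mul_assoc, ← Units.val_mul]

def expHom : IntAffine R u →* Multiplicative ℤ where
  toFun g := .ofAdd g.exp
  map_one' := rfl
  map_mul' _ _ := rfl

@[simp] lemma expHom_eq_one_iff {g : IntAffine R u} : expHom g = 1 ↔ g.exp = 0 := ofAdd_eq_one

@[simp] lemma mk_zero_left_zpow (b : R) (n : ℤ) :
    (⟨0, b⟩ : IntAffine R u) ^ n = ⟨0, n * b⟩ := by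
  induction n using Int.induction_on with
  | zero => ext <;> simp
  | succ n ih => ext <;> simp [zpow_add_one, ih]; ring
  | pred n ih => ext <;> simp [zpow_sub_one, ih]; ring

@[simp] lemma mk_zero_left_pow (b : R) (n : ℕ) :
    (⟨0, b⟩ : IntAffine R u) ^ n = ⟨0, n * b⟩ := by
  rw [← zpow_natCast, mk_zero_left_zpow, Int.cast_natCast]

@[simp] lemma mk_zero_right_pow (k : ℤ) (n : ℕ) :
    (⟨k, 0⟩ : IntAffine R u) ^ n = ⟨n * k, 0⟩ := by
  induction n with
  | zero => ext <;> simp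
  | succ n ih => ext <;> simp [pow_succ, ih]; ring

lemma commute_iff {g h : IntAffine R u} :
    Commute g h ↔ (u ^ h.exp : Rˣ) * g.shift + h.shift = (u ^ g.exp : Rˣ) * h.shift + g.shift := by
  simp [Commute, SemiconjBy, IntAffine.ext_iff, add_comm]

lemma commute_of_eq_one (hu : u = 1) (g h : IntAffine R u) : Commute g h := by
  simp [commute_iff, hu, add_comm]

variable [IsDomain R]

lemma eq_one_of_commute_of_exp_eq_zero (hu : ¬IsOfFinOrder u) {g x : IntAffine R u}
    (hx : x.exp ≠ 0) (hc : Commute g x) (hg : g.exp = 0) : g = 1 := by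
  rw [commute_iff, hg] at hc
  have : (((u ^ x.exp : Rˣ) : R) - 1) * g.shift = 0 := by simp at hc; linear_combination hc
  have hb := (mul_eq_zero.mp this).resolve_left
    (sub_ne_zero.mpr (Units.val_zpow_ne_one_of_not_isOfFinOrder hu hx))
  ext <;> simp [hg, hb]

lemma commute_iff_exp_eq_zero (hu : ¬IsOfFinOrder u) {g x : IntAffine R u} (hx : x.exp = 0)
    (hx1 : x ≠ 1) : Commute g x ↔ g.exp = 0 := by
  have hb : x.shift ≠ 0 := fun hb => hx1 (by ext <;> simp [hx, hb])
  rw [commute_iff, hx]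
  refine ⟨fun hc => ?_, fun hg => by simp [hg, add_comm]⟩
  by_contra hg
  have : (((u ^ g.exp : Rˣ) : R) - 1) * x.shift = 0 := by simp at hc; linear_combination -hc
  exact mul_ne_zero (sub_ne_zero.mpr (Units.val_zpow_ne_one_of_not_isOfFinOrder hu hg)) hb this

end IntAffine

lemma Rat.not_isOfFinOrder_mk0_natCast {m : ℕ} (h : (m : ℚ) ≠ 0) (hm : m ≠ 1) :
    ¬IsOfFinOrder (Units.mk0 (m : ℚ) h) := by
  rw [isOfFinOrder_iff_zpow_eq_one]
  rintro ⟨n, hn, hu⟩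
  have := congrArg Units.val hu
  rw [Units.val_zpow_eq_zpow_val, Units.val_mk0, Units.val_one,
    zpow_eq_one_iff_right₀ (Nat.cast_nonneg m) (by exact_mod_cast hm)] at this
  exact hn this

namespace BS

variable {m : ℕ}

/-- `PresentedGroup.of` with values in `BS m` rather than `PresentedGroup (BSRels m)`, so that
`wordHom gen` multiplies in `BS m`. -/
def gen : Bool → BS m := PresentedGroup.of
def a : BS m := gen true
def t : BS m := gen false

@[simp] lemma gen_true : gen true = (a : BS m) := rfl
@[simp] lemma gen_false : gen false = (t : BS m) := rfl

lemma closure_range_gen : Subgroup.closure (Set.range (gen : Bool → BS m)) = ⊤ :=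
  PresentedGroup.closure_range_of _

lemma t_inv_mul_a_mul_t : t⁻¹ * a * t = (a : BS m) ^ m := by
  have h : PresentedGroup.mk (BSRels m) ((FreeGroup.of false)⁻¹ * FreeGroup.of true *
      FreeGroup.of false * (FreeGroup.of true ^ m)⁻¹) = 1 :=
    (QuotientGroup.eq_one_iff _).mpr (Subgroup.subset_normalClosure rfl)
  rw [map_mul, map_mul, map_mul, map_inv, map_inv, map_pow, mul_inv_eq_one] at h
  exact h

lemma a_zpow_mul_t (j : ℤ) : (a : BS m) ^ j * t = t * a ^ (j * m) := by
  have h := conj_zpow (a := t⁻¹) (b := (a : BS m)) (i := j)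
  rw [inv_inv, t_inv_mul_a_mul_t, ← zpow_natCast, ← zpow_mul, mul_comm] at h
  rw [h]
  group

lemma t_inv_mul_a_zpow (j : ℤ) : (t : BS m)⁻¹ * a ^ j = a ^ (j * m) * t⁻¹ := by
  rw [inv_mul_eq_iff_eq_mul, ← mul_assoc, ← a_zpow_mul_t, mul_inv_cancel_right]

lemma a_zpow_mul_t_pow (j : ℤ) (i : ℕ) : (a : BS m) ^ j * t ^ i = t ^ i * a ^ (j * m ^ i) := by
  induction i generalizing j with
  | zero => simp
  | succ i ih =>
    rw [pow_succ', ← mul_assoc, a_zpow_mul_t, mul_assoc, ih, ← mul_assoc, ← pow_succ']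
    ring_nf

lemma exists_normalForm (g : BS m) : ∃ (i k : ℕ) (j : ℤ), g = t ^ i * a ^ j * (t ^ k)⁻¹ := by
  have hg : g ∈ Subgroup.closure (Set.range gen) := by
    rw [closure_range_gen]; trivial
  induction hg using Subgroup.closure_induction_left with
  | one => exact ⟨0, 0, 0, by simp⟩
  | mul_left x hx y _ ih =>
    obtain ⟨i, k, j, rfl⟩ := ih
    obtain ⟨_ | _, rfl⟩ := hx
    · exact ⟨i + 1, k, j, show t * _ = _ by rw [pow_succ']; group⟩
    · refine ⟨i, k, m ^ i + j, show a * _ = _ from ?_⟩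
      have h := a_zpow_mul_t_pow (m := m) 1 i
      rw [zpow_one, one_mul] at h
      simp only [zpow_add, ← mul_assoc, h]
  | inv_mul_cancel x hx y _ ih =>
    obtain ⟨i, k, j, rfl⟩ := ih
    obtain ⟨_ | _, rfl⟩ := hx
    · cases i with
      | zero =>
        refine ⟨0, k + 1, j * m, show t⁻¹ * _ = _ from ?_⟩
        rw [pow_zero, one_mul, one_mul, pow_succ, mul_inv_rev, ← mul_assoc, ← mul_assoc,
          t_inv_mul_a_zpow]
      | succ i => exact ⟨i, k, j, show t⁻¹ * _ = _ by rw [pow_succ']; group⟩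
    · refine ⟨i, k, -m ^ i + j, show a⁻¹ * _ = _ from ?_⟩
      have h := a_zpow_mul_t_pow (m := m) (-1) i
      rw [zpow_neg_one, neg_one_mul] at h
      simp only [zpow_add, ← mul_assoc, h]

variable [NeZero m]

def toIntAffine : BS m →* IntAffine ℚ (.mk0 m (NeZero.ne _)) :=
  PresentedGroup.toGroup (f := fun b => if b then ⟨0, 1⟩ else ⟨1, 0⟩) (by
    rintro _ rfl
    ext <;> simp)

@[simp] lemma toIntAffine_a : toIntAffine (a : BS m) = ⟨0, 1⟩ := PresentedGroup.toGroup.of _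
@[simp] lemma toIntAffine_t : toIntAffine (t : BS m) = ⟨1, 0⟩ := PresentedGroup.toGroup.of _

lemma toIntAffine_normalForm (i k : ℕ) (j : ℤ) :
    toIntAffine (t ^ i * a ^ j * (t ^ k)⁻¹ : BS m) = ⟨i - k, (m : ℚ) ^ (-k : ℤ) * j⟩ := by
  ext <;> simp [sub_eq_add_neg]

lemma toIntAffine_injective : Function.Injective (toIntAffine : BS m →* _) := by
  refine (injective_iff_map_eq_one _).mpr fun g hg => ?_
  obtain ⟨i, k, j, rfl⟩ := exists_normalForm g
  rw [toIntAffine_normalForm, IntAffine.ext_iff] at hg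
  obtain ⟨rfl, rfl⟩ : i = k ∧ j = 0 := by simpa [sub_eq_zero, NeZero.ne] using hg
  simp

def tExponent : BS m →* Multiplicative ℤ := IntAffine.expHom.comp toIntAffine

lemma tExponent_normalForm (i k : ℕ) (j : ℤ) :
    tExponent (t ^ i * a ^ j * (t ^ k)⁻¹ : BS m) = .ofAdd (i - k : ℤ) := by
  simp [tExponent, toIntAffine_normalForm, IntAffine.expHom]

lemma commute_of_eq_one (hm : m = 1) (g x : BS m) : Commute g x := by
  rw [← commute_map_iff toIntAffine_injective]
  exact IntAffine.commute_of_eq_one (Units.ext (by simp [hm])) _ _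

open Subgroup

lemma centralizer_eq_ker (hm : m ≠ 1) {x : BS m} (hx : tExponent x = 1) (hx1 : x ≠ 1) :
    centralizer {x} = tExponent.ker := by
  ext g
  rw [mem_centralizer_singleton_iff, MonoidHom.mem_ker, ← commute_iff_eq,
    ← commute_map_iff toIntAffine_injective]
  exact IntAffine.commute_iff_exp_eq_zero (Rat.not_isOfFinOrder_mk0_natCast _ hm)
    (by simpa [tExponent] using hx) ((map_ne_one_iff _ toIntAffine_injective).mpr hx1)

lemma disjoint_centralizer_ker (hm : m ≠ 1) {x : BS m} (hx : tExponent x ≠ 1) :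
    Disjoint (centralizer {x}) tExponent.ker := by
  refine disjoint_def.mpr fun {g} hgx hg => ?_
  rw [mem_centralizer_singleton_iff, ← commute_iff_eq,
    ← commute_map_iff toIntAffine_injective] at hgx
  rw [← map_eq_one_iff _ toIntAffine_injective]
  exact IntAffine.eq_one_of_commute_of_exp_eq_zero (Rat.not_isOfFinOrder_mk0_natCast _ hm)
    (by simpa [tExponent] using hx) hgx (by simpa [tExponent] using hg)

theorem centralizer_eq_top_or_eq_ker_or_eq_zpowers (x : BS m) :
    centralizer {x} = ⊤ ∨ centralizer {x} = tExponent.ker ∨ ∃ g, centralizer {x} = zpowers g := by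
  by_cases hm : m = 1
  · exact .inl <| (eq_top_iff' _).mpr fun g =>
      mem_centralizer_singleton_iff.mpr (commute_of_eq_one hm g x)
  by_cases hx : tExponent x = 1
  · by_cases hx1 : x = 1
    · exact .inl <| (eq_top_iff' _).mpr fun g => mem_centralizer_singleton_iff.mpr (by simp [hx1])
    · exact .inr <| .inl <| centralizer_eq_ker hm hx hx1
  · obtain ⟨g, hg⟩ := exists_zpowers_eq_of_disjoint_ker _ (disjoint_centralizer_ker hm hx)
    exact .inr <| .inr ⟨g, hg.symm⟩

end BS

/-- `S → ε | a S | a⁻¹ S | t S t⁻¹`; the letter `.inl b` stands for `BS.gen b` and `.inr b` for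
its inverse. -/
abbrev BS.kerGrammar : ContextFreeGrammar (Bool ⊕ Bool) where
  NT := Unit
  initial := ()
  rules := {⟨(), []⟩, ⟨(), [.terminal (.inl true), .nonterminal ()]⟩,
    ⟨(), [.terminal (.inr true), .nonterminal ()]⟩,
    ⟨(), [.terminal (.inl false), .nonterminal (), .terminal (.inr false)]⟩}

namespace BS

variable {m : ℕ} [NeZero m]

lemma wordHom_mem_ker_of_mem_language {w : List (Bool ⊕ Bool)} (hw : w ∈ kerGrammar.language) :
    wordHom gen (FreeMonoid.ofList w) ∈ (tExponent : BS m →* _).ker := by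
  set K := (tExponent : BS m →* _).ker
  have ha : a ∈ K := by simp [K, tExponent]
  simp only [wordHom_ofList]
  refine prod_mem_of_mem_language (I := fun _ => (K : Set (BS m))) ?_ hw
  simp only [Finset.mem_insert, Finset.mem_singleton, forall_eq_or_imp, forall_eq,
    List.map_cons, List.map_nil, List.prod_cons, List.prod_nil, interpret, mul_one,
    Set.mul_subset_iff, Set.mem_mul, Set.mem_singleton_iff, Sum.elim_inl, Sum.elim_inr,
    gen_true, gen_false, SetLike.mem_coe, forall_exists_index, and_imp]
  refine ⟨by simp, fun y hy => mul_mem ha hy, fun y hy => mul_mem (inv_mem ha) hy, ?_⟩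
  rintro _ y hy rfl
  rw [← mul_assoc]
  exact tExponent.normal_ker.conj_mem y hy t

lemma mem_image_language_of_mem_ker {g : BS m} (hg : g ∈ (tExponent : BS m →* _).ker) :
    g ∈ (fun w => wordHom gen (FreeMonoid.ofList w)) '' kerGrammar.language := by
  set S := (fun w => wordHom gen (FreeMonoid.ofList w)) '' kerGrammar.language
  have wrap {p q : List (Bool ⊕ Bool)}
      (hr : ⟨(), p.map .terminal ++ [.nonterminal ()] ++ q.map .terminal⟩ ∈ kerGrammar.rules)
      {y : BS m} (hy : y ∈ S) : wordHom gen (.ofList p) * y * wordHom gen (.ofList q) ∈ S := by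
    obtain ⟨v, hv, rfl⟩ := hy
    exact ⟨p ++ v ++ q, append_mem_language_of_rule hr hv, by simp [mul_assoc]⟩
  have ha (j : ℤ) : a ^ j ∈ S :=
    zpow_induction_left (P := (· ∈ S)) ⟨[], nil_mem_language_of_rule (by simp), by simp⟩
      (fun y hy => by convert wrap (p := [.inl true]) (q := []) (by simp) hy using 1; simp)
      (fun y hy => by convert wrap (p := [.inr true]) (q := []) (by simp) hy using 1; simp) j
  obtain ⟨i, k, j, rfl⟩ := exists_normalForm g
  obtain rfl : i = k := by
    rw [MonoidHom.mem_ker, tExponent_normalForm, ofAdd_eq_one, sub_eq_zero] at hg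
    exact_mod_cast hg
  clear hg
  induction i with
  | zero => simpa using ha j
  | succ i ih =>
    convert wrap (p := [.inl false]) (q := [.inr false]) (by simp) ih using 1
    simp [pow_succ', mul_assoc]

theorem isAlgebraicSubset_ker :
    IsAlgebraicSubset gen ((tExponent : BS m →* _).ker : Set (BS m)) :=
  ⟨_, ⟨kerGrammar, rfl⟩, Set.Subset.antisymm
    (by rintro _ ⟨w, hw, rfl⟩; exact wordHom_mem_ker_of_mem_language hw)
    fun _ hg => mem_image_language_of_mem_ker hg⟩

end BS

/-- In `BS(1, m)` with `m ≥ 1`, the centralizer of every element is an algebraic subset,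
with respect to the canonical generating map sending `true ↦ a`, `false ↦ t`. -/
theorem centralizer_isAlgebraic_BS (m : ℕ) (hm : 1 ≤ m) (x : BS m) :
    IsAlgebraicSubset (fun b : Bool => (PresentedGroup.of b : BS m))
      {g : BS m | g * x = x * g} := by
  have : NeZero m := ⟨by omega⟩
  have hgen : Function.Surjective (wordHom (BS.gen : Bool → BS m)) :=
    wordHom_surjective_s6 BS.closure_range_gen
  have hx : {g : BS m | g * x = x * g} = Subgroup.centralizer {x} := by
    ext; exact Subgroup.mem_centralizer_singleton_iff.symm
  suffices IsAlgebraicSubset BS.gen (Subgroup.centralizer {x} : Set (BS m)) by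
    rw [← hx] at this
    exact this
  obtain h | h | ⟨g, h⟩ := BS.centralizer_eq_top_or_eq_ker_or_eq_zpowers x <;> rw [h]
  · rw [← BS.closure_range_gen]
    exact .subgroupClosure hgen (Set.finite_range _)
  · exact BS.isAlgebraicSubset_ker
  · rw [Subgroup.zpowers_eq_closure]
    exact .subgroupClosure hgen (Set.finite_singleton g)
end
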